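/- arXiv:2209.02949 — 4 statements merged into one kernel-verified Lean document; each statement's English description precedes it below -/
import Mathlib

section
/- Let 2 ≤ j ≤ m and let i ∈ {1,…,n} satisfy |s_i − p_j| ≤ δ. Let R be the set of positions r ∈ {1,…,n} such that gmin_{j−1} ≤ i − r − 1 ≤ gmax_{j−1} and at least one δ-partial occurrence of length j−1 ending at r exists. If R is nonempty, then at least one δ-partial occurrence of length j ending at i exists and M(j, i) = (min_{r ∈ R} M(j−1, r)) + |s_i − p_j|. Moreover, for j = 1 and any i with |s_i − p_1| ≤ δ, M(1, i) = |s_i − p_1|. -/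
/-- The γ-distance of the length-`j` prefix of the tuple `l` against the
pattern prefix `p₁ … p_j`: `∑_{k=1}^{j} |s_(l k) − p k|`. -/
def gammaDist (s p : ℕ → ℤ) (j : ℕ) (l : ℕ → ℕ) : ℤ :=
  ∑ k ∈ Finset.Icc 1 j, |s (l k) - p k|

/-- `l` (restricted to indices `1,…,j`) is a δ-partial occurrence of length `j`
ending at `i`: indices in `{1,…,n}`, strictly increasing, `l j = i`, the gap
constraints hold, and `|s_(l k) − p k| ≤ δ` for all `1 ≤ k ≤ j`. -/
def IsPartialOcc (n : ℕ) (s p : ℕ → ℤ) (gmin gmax : ℕ → ℕ) (δ : ℕ)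
    (j i : ℕ) (l : ℕ → ℕ) : Prop :=
  (∀ k, 1 ≤ k → k ≤ j → 1 ≤ l k ∧ l k ≤ n) ∧
  (∀ k, 1 ≤ k → k < j → l k < l (k + 1)) ∧
  l j = i ∧
  (∀ k, 1 ≤ k → k < j →
    (gmin k : ℤ) ≤ (l (k + 1) : ℤ) - (l k : ℤ) - 1 ∧
    (l (k + 1) : ℤ) - (l k : ℤ) - 1 ≤ (gmax k : ℤ)) ∧
  (∀ k, 1 ≤ k → k ≤ j → |s (l k) - p k| ≤ (δ : ℤ))

/-- The minimal root distance `M(j, i)`: the minimum of the γ-distances of all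
δ-partial occurrences of length `j` ending at `i`. -/
noncomputable def Mrd (n : ℕ) (s p : ℕ → ℤ) (gmin gmax : ℕ → ℕ) (δ : ℕ)
    (j i : ℕ) : ℤ :=
  sInf {d : ℤ | ∃ l, IsPartialOcc n s p gmin gmax δ j i l ∧ gammaDist s p j l = d}

section MyAux

variable (n : ℕ) (s p : ℕ → ℤ) (gmin gmax : ℕ → ℕ) (δ : ℕ)

lemma gammaDist_nonneg (j : ℕ) (l : ℕ → ℕ) : 0 ≤ gammaDist s p j l :=
  Finset.sum_nonneg fun _ _ => abs_nonneg _

lemma bddS (j i : ℕ) :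
    BddBelow {d : ℤ | ∃ l, IsPartialOcc n s p gmin gmax δ j i l ∧ gammaDist s p j l = d} := by
  refine ⟨0, ?_⟩
  rintro d ⟨l, _, rfl⟩
  exact gammaDist_nonneg s p j l

lemma Mrd_one (i' : ℕ) (h1 : 1 ≤ i') (h2 : i' ≤ n) (hδ' : |s i' - p 1| ≤ (δ : ℤ)) :
    Mrd n s p gmin gmax δ 1 i' = |s i' - p 1| := by
  have hset : {d : ℤ | ∃ l, IsPartialOcc n s p gmin gmax δ 1 i' l ∧ gammaDist s p 1 l = d}
      = {|s i' - p 1|} := by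
    ext d
    constructor
    · rintro ⟨l, ⟨hb, hinc, hend, hgap, hd⟩, rfl⟩
      simp [gammaDist, Finset.Icc_self, hend]
    · rintro rfl
      refine ⟨fun _ => i', ⟨fun k _ _ => ⟨h1, h2⟩, fun k hk1 hk2 => absurd hk2 (by omega),
        rfl, fun k hk1 hk2 => absurd hk2 (by omega), fun k hk1 hk2 => ?_⟩,
        by simp [gammaDist, Finset.Icc_self]⟩
      have : k = 1 := by omega
      subst this; exact hδ'
  rw [Mrd, hset, csInf_singleton]

lemma extend (j' i r : ℕ) (hj' : 1 ≤ j') (hi1 : 1 ≤ i) (hin : i ≤ n)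
    (hδi : |s i - p (j' + 1)| ≤ (δ : ℤ))
    (hg1 : (gmin j' : ℤ) ≤ (i : ℤ) - (r : ℤ) - 1)
    (l : ℕ → ℕ) (hl : IsPartialOcc n s p gmin gmax δ j' r l)
    (hg2 : (i : ℤ) - (r : ℤ) - 1 ≤ (gmax j' : ℤ)) :
    IsPartialOcc n s p gmin gmax δ (j' + 1) i (fun k => if k ≤ j' then l k else i) ∧
    gammaDist s p (j' + 1) (fun k => if k ≤ j' then l k else i)
      = gammaDist s p j' l + |s i - p (j' + 1)| := by
  obtain ⟨hb, hinc, hend, hgap, hd⟩ := hl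
  have hgnn : (0 : ℤ) ≤ (gmin j' : ℤ) := Int.ofNat_nonneg _
  have hri : r < i := by omega
  constructor
  · refine ⟨?_, ?_, ?_, ?_, ?_⟩
    · intro k hk1 hk2
      by_cases hk : k ≤ j'
      · simpa [hk] using hb k hk1 hk
      · simp only [hk, if_false]
        exact ⟨hi1, hin⟩
    · intro k hk1 hk2
      by_cases hk : k + 1 ≤ j'
      · have hkj : k ≤ j' := by omega
        simpa [hk, hkj] using hinc k hk1 (by omega)
      · have hkj : k = j' := by omega
        subst hkj
        simp only [le_refl, if_true, hk, if_false, hend]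
        exact hri
    · simp
    · intro k hk1 hk2
      by_cases hk : k + 1 ≤ j'
      · have hkj : k ≤ j' := by omega
        simpa [hk, hkj] using hgap k hk1 (by omega)
      · have hkj : k = j' := by omega
        subst hkj
        simp only [le_refl, if_true, hk, if_false, hend]
        exact ⟨hg1, hg2⟩
    · intro k hk1 hk2
      by_cases hk : k ≤ j'
      · simpa [hk] using hd k hk1 hk
      · have hkj : k = j' + 1 := by omega
        subst hkj
        simpa using hδi
  · rw [gammaDist, gammaDist, Finset.sum_Icc_succ_top (by omega : 1 ≤ j' + 1)]
    have h1 : ∀ k ∈ Finset.Icc 1 j',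
        |s (if k ≤ j' then l k else i) - p k| = |s (l k) - p k| := by
      intro k hk
      rw [Finset.mem_Icc] at hk
      simp [hk.2]
    rw [Finset.sum_congr rfl h1]
    simp

lemma restrict (j' i : ℕ) (hj' : 1 ≤ j') (l : ℕ → ℕ)
    (hl : IsPartialOcc n s p gmin gmax δ (j' + 1) i l) :
    IsPartialOcc n s p gmin gmax δ j' (l j') l ∧
    gammaDist s p (j' + 1) l = gammaDist s p j' l + |s i - p (j' + 1)| := by
  obtain ⟨hb, hinc, hend, hgap, hd⟩ := hl
  constructor
  · exact ⟨fun k hk1 hk2 => hb k hk1 (by omega), fun k hk1 hk2 => hinc k hk1 (by omega),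
      rfl, fun k hk1 hk2 => hgap k hk1 (by omega), fun k hk1 hk2 => hd k hk1 (by omega)⟩
  · rw [gammaDist, gammaDist, Finset.sum_Icc_succ_top (by omega : 1 ≤ j' + 1), hend]

end MyAux

theorem stmt0 (n m : ℕ) (hn : 1 ≤ n) (hm : 1 ≤ m) (s p : ℕ → ℤ)
    (gmin gmax : ℕ → ℕ) (δ γ : ℕ)
    (j i : ℕ) (hj2 : 2 ≤ j) (hjm : j ≤ m) (hi1 : 1 ≤ i) (hin : i ≤ n)
    (hδ : |s i - p j| ≤ (δ : ℤ))
    (R : Finset ℕ)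
    (hR : ∀ r, r ∈ R ↔ 1 ≤ r ∧ r ≤ n ∧
        (gmin (j - 1) : ℤ) ≤ (i : ℤ) - (r : ℤ) - 1 ∧
        (i : ℤ) - (r : ℤ) - 1 ≤ (gmax (j - 1) : ℤ) ∧
        ∃ l, IsPartialOcc n s p gmin gmax δ (j - 1) r l)
    (hRne : R.Nonempty) :
    ((∃ l, IsPartialOcc n s p gmin gmax δ j i l) ∧
      Mrd n s p gmin gmax δ j i =
        (R.inf' hRne fun r => Mrd n s p gmin gmax δ (j - 1) r) + |s i - p j|) ∧
    (∀ i', 1 ≤ i' → i' ≤ n → |s i' - p 1| ≤ (δ : ℤ) →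
      Mrd n s p gmin gmax δ 1 i' = |s i' - p 1|) := by
  obtain ⟨j', rfl⟩ : ∃ j', j = j' + 1 := ⟨j - 1, by omega⟩
  have hj' : 1 ≤ j' := by omega
  simp only [Nat.add_sub_cancel] at hR ⊢
  -- abbreviations
  set D : ℤ := |s i - p (j' + 1)| with hD
  -- nonemptiness of the length-(j'+1) set
  have hSne : ∀ r ∈ R, {d : ℤ | ∃ l, IsPartialOcc n s p gmin gmax δ j' r l ∧
      gammaDist s p j' l = d}.Nonempty := by
    intro r hr
    obtain ⟨_, _, _, _, l, hl⟩ := (hR r).mp hr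
    exact ⟨gammaDist s p j' l, l, hl, rfl⟩
  have hMrdmem : ∀ r ∈ R, ∃ l, IsPartialOcc n s p gmin gmax δ j' r l ∧
      gammaDist s p j' l = Mrd n s p gmin gmax δ j' r := by
    intro r hr
    exact Int.csInf_mem (hSne r hr) (bddS n s p gmin gmax δ j' r)
  -- existence for length j'+1
  have hexist : ∀ r ∈ R, ∀ l, IsPartialOcc n s p gmin gmax δ j' r l →
      ∃ l', IsPartialOcc n s p gmin gmax δ (j' + 1) i l' ∧
        gammaDist s p (j' + 1) l' = gammaDist s p j' l + D := by
    intro r hr l hl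
    obtain ⟨h1, h2, hg1, hg2, _⟩ := (hR r).mp hr
    obtain ⟨ho, hg⟩ := extend n s p gmin gmax δ j' i r hj' hi1 hin hδ hg1 l hl hg2
    exact ⟨_, ho, hg⟩
  obtain ⟨r₀, hr₀⟩ := id hRne
  obtain ⟨l₀, hl₀, hgl₀⟩ := hMrdmem r₀ hr₀
  obtain ⟨l₁, hl₁, hgl₁⟩ := hexist r₀ hr₀ l₀ hl₀
  have hSjne : {d : ℤ | ∃ l, IsPartialOcc n s p gmin gmax δ (j' + 1) i l ∧
      gammaDist s p (j' + 1) l = d}.Nonempty := ⟨_, l₁, hl₁, rfl⟩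
  constructor
  constructor
  · exact ⟨l₁, hl₁⟩
  · -- the equality
    have hle : Mrd n s p gmin gmax δ (j' + 1) i ≤
        (R.inf' hRne fun r => Mrd n s p gmin gmax δ j' r) + D := by
      obtain ⟨r₂, hr₂mem, hr₂⟩ := Finset.exists_mem_eq_inf' hRne
        (fun r => Mrd n s p gmin gmax δ j' r)
      obtain ⟨l₂, hl₂, hgl₂⟩ := hMrdmem r₂ hr₂mem
      obtain ⟨l₃, hl₃, hgl₃⟩ := hexist r₂ hr₂mem l₂ hl₂
      have : gammaDist s p (j' + 1) l₃ ∈ {d : ℤ | ∃ l,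
          IsPartialOcc n s p gmin gmax δ (j' + 1) i l ∧ gammaDist s p (j' + 1) l = d} :=
        ⟨l₃, hl₃, rfl⟩
      have h := csInf_le (bddS n s p gmin gmax δ (j' + 1) i) this
      rw [Mrd, hr₂]
      calc sInf _ ≤ gammaDist s p (j' + 1) l₃ := h
        _ = Mrd n s p gmin gmax δ j' r₂ + D := by rw [hgl₃, hgl₂]
    have hge : (R.inf' hRne fun r => Mrd n s p gmin gmax δ j' r) + D ≤
        Mrd n s p gmin gmax δ (j' + 1) i := by
      obtain ⟨l, hl, hgl⟩ := Int.csInf_mem hSjne (bddS n s p gmin gmax δ (j' + 1) i)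
      obtain ⟨hlo, hsum⟩ := restrict n s p gmin gmax δ j' i hj' l hl
      obtain ⟨hb, hinc, hend, hgap, hd⟩ := hl
      have hrmem : l j' ∈ R := by
        rw [hR]
        have h1 := hb j' hj' (by omega)
        have h2 := hgap j' hj' (by omega)
        rw [hend] at h2
        exact ⟨h1.1, h1.2, h2.1, h2.2, l, hlo⟩
      have h3 : Mrd n s p gmin gmax δ j' (l j') ≤ gammaDist s p j' l :=
        csInf_le (bddS n s p gmin gmax δ j' (l j')) ⟨l, hlo, rfl⟩
      have h4 : (R.inf' hRne fun r => Mrd n s p gmin gmax δ j' r) ≤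
          Mrd n s p gmin gmax δ j' (l j') := Finset.inf'_le _ hrmem
      rw [Mrd, hgl] at *
      omega
    omega
  · intro i' h1 h2 h3
    exact Mrd_one n s p gmin gmax δ i' h1 h2 h3
end

section
/- Let 1 ≤ j ≤ m and i ∈ {1,…,n}. If every δ-partial occurrence of length j ending at i has γ-distance strictly greater than γ (in particular, if M(j, i) > γ), then there is no (δ,γ)-approximate occurrence l_1 < ⋯ < l_m of p in s with l_j = i. -/
theorem stmt1 (n m : ℕ) (hn : 1 ≤ n) (hm : 1 ≤ m) (s p : ℕ → ℤ)
    (gmin gmax : ℕ → ℕ) (δ γ : ℕ)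
    (j i : ℕ) (hj1 : 1 ≤ j) (hjm : j ≤ m) (hi1 : 1 ≤ i) (hin : i ≤ n)
    (h : ∀ l, IsPartialOcc n s p gmin gmax δ j i l →
      (γ : ℤ) < gammaDist s p j l) :
    ¬ ∃ l, IsPartialOcc n s p gmin gmax δ m (l m) l ∧
      gammaDist s p m l ≤ (γ : ℤ) ∧ l j = i := by
  rintro ⟨l, ⟨hb, hmono, _, hgap, hδ⟩, hγ, hji⟩
  have hpart : IsPartialOcc n s p gmin gmax δ j i l :=
    ⟨fun k h1 h2 => hb k h1 (h2.trans hjm),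
     fun k h1 h2 => hmono k h1 (lt_of_lt_of_le h2 hjm),
     hji,
     fun k h1 h2 => hgap k h1 (lt_of_lt_of_le h2 hjm),
     fun k h1 h2 => hδ k h1 (h2.trans hjm)⟩
  have hle : gammaDist s p j l ≤ gammaDist s p m l := by
    apply Finset.sum_le_sum_of_subset_of_nonneg
    · exact Finset.Icc_subset_Icc_right hjm
    · exact fun k _ _ => abs_nonneg _
  exact absurd (le_trans hle hγ) (not_le.mpr (h l hpart))
end

section
/- Let 2 ≤ j ≤ m and let r < i be positions in {1,…,n} such that gmin_{j−1} ≤ i − r − 1 ≤ gmax_{j−1}, at least one δ-partial occurrence of length j−1 ending at r exists, and M(j−1, r) + |s_i − p_j| > γ. Then there is no (δ,γ)-approximate occurrence l_1 < ⋯ < l_m of p in s with l_{j−1} = r and l_j = i. -/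
theorem stmt2 (n m : ℕ) (hn : 1 ≤ n) (hm : 1 ≤ m) (s p : ℕ → ℤ)
    (gmin gmax : ℕ → ℕ) (δ γ : ℕ)
    (j r i : ℕ) (hj2 : 2 ≤ j) (hjm : j ≤ m)
    (hr1 : 1 ≤ r) (hrn : r ≤ n) (hi1 : 1 ≤ i) (hin : i ≤ n) (hri : r < i)
    (hgap1 : (gmin (j - 1) : ℤ) ≤ (i : ℤ) - (r : ℤ) - 1)
    (hgap2 : (i : ℤ) - (r : ℤ) - 1 ≤ (gmax (j - 1) : ℤ))
    (hex : ∃ l, IsPartialOcc n s p gmin gmax δ (j - 1) r l)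
    (hM : (γ : ℤ) < Mrd n s p gmin gmax δ (j - 1) r + |s i - p j|) :
    ¬ ∃ l, IsPartialOcc n s p gmin gmax δ m (l m) l ∧
      gammaDist s p m l ≤ (γ : ℤ) ∧ l (j - 1) = r ∧ l j = i := by
  rintro ⟨l, hocc, hγ, hlr, hli⟩
  obtain ⟨hbnd, hmono, hend, hgaps, hδ⟩ := hocc
  have hj1 : 1 ≤ j - 1 := by omega
  have hjm1 : j - 1 ≤ m := by omega
  -- the prefix is a partial occurrence of length j-1 ending at r
  have hprefix : IsPartialOcc n s p gmin gmax δ (j - 1) r l := by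
    refine ⟨fun k hk1 hk2 => hbnd k hk1 (by omega),
      fun k hk1 hk2 => hmono k hk1 (by omega), hlr,
      fun k hk1 hk2 => hgaps k hk1 (by omega),
      fun k hk1 hk2 => hδ k hk1 (by omega)⟩
  have hmem : gammaDist s p (j - 1) l ∈
      {d : ℤ | ∃ l', IsPartialOcc n s p gmin gmax δ (j - 1) r l' ∧
        gammaDist s p (j - 1) l' = d} := ⟨l, hprefix, rfl⟩
  have hbdd : BddBelow {d : ℤ | ∃ l', IsPartialOcc n s p gmin gmax δ (j - 1) r l' ∧
      gammaDist s p (j - 1) l' = d} := by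
    refine ⟨0, fun d hd => ?_⟩
    obtain ⟨l', _, rfl⟩ := hd
    exact Finset.sum_nonneg fun k _ => abs_nonneg _
  have hMle : Mrd n s p gmin gmax δ (j - 1) r ≤ gammaDist s p (j - 1) l :=
    csInf_le hbdd hmem
  -- split the sum
  have hsplit : gammaDist s p j l = gammaDist s p (j - 1) l + |s (l j) - p j| := by
    unfold gammaDist
    have : j = (j - 1) + 1 := by omega
    rw [this, Finset.sum_Icc_succ_top (by omega : 1 ≤ j - 1 + 1), Nat.add_sub_cancel]
  have hmono' : gammaDist s p j l ≤ gammaDist s p m l := by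
    unfold gammaDist
    apply Finset.sum_le_sum_of_subset_of_nonneg
    · exact Finset.Icc_subset_Icc_right hjm
    · exact fun k _ _ => abs_nonneg _
  rw [hli] at hsplit
  omega
end

section
/- Let 2 ≤ j ≤ m and let r < i be positions in {1,…,n} such that gmin_{j−1} ≤ i − r − 1 ≤ gmax_{j−1}, |s_i − p_j| ≤ δ, at least one δ-partial occurrence of length j−1 ending at r exists, and M(j−1, r) + |s_i − p_j| ≤ γ. Then there exists a δ-partial occurrence l_1 < ⋯ < l_j of length j ending at i with l_{j−1} = r whose γ-distance is at most γ. -/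
theorem stmt3 (n m : ℕ) (hn : 1 ≤ n) (hm : 1 ≤ m) (s p : ℕ → ℤ)
    (gmin gmax : ℕ → ℕ) (δ γ : ℕ)
    (j r i : ℕ) (hj2 : 2 ≤ j) (hjm : j ≤ m)
    (hr1 : 1 ≤ r) (hrn : r ≤ n) (hi1 : 1 ≤ i) (hin : i ≤ n) (hri : r < i)
    (hgap1 : (gmin (j - 1) : ℤ) ≤ (i : ℤ) - (r : ℤ) - 1)
    (hgap2 : (i : ℤ) - (r : ℤ) - 1 ≤ (gmax (j - 1) : ℤ))
    (hδ : |s i - p j| ≤ (δ : ℤ))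
    (hex : ∃ l, IsPartialOcc n s p gmin gmax δ (j - 1) r l)
    (hM : Mrd n s p gmin gmax δ (j - 1) r + |s i - p j| ≤ (γ : ℤ)) :
    ∃ l, IsPartialOcc n s p gmin gmax δ j i l ∧ l (j - 1) = r ∧
      gammaDist s p j l ≤ (γ : ℤ) := by
  classical
  obtain ⟨l0, hl0⟩ := hex
  -- the set of distances
  set S : Set ℤ := {d : ℤ | ∃ l, IsPartialOcc n s p gmin gmax δ (j-1) r l ∧ gammaDist s p (j-1) l = d} with hS
  have hne : S.Nonempty := ⟨gammaDist s p (j-1) l0, l0, hl0, rfl⟩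
  have hbdd : BddBelow S := by
    refine ⟨0, ?_⟩
    rintro d ⟨l, -, rfl⟩
    exact Finset.sum_nonneg fun k _ => abs_nonneg _
  have hmem : Mrd n s p gmin gmax δ (j-1) r ∈ S := Int.csInf_mem hne hbdd
  obtain ⟨l', hl', hd⟩ := hmem
  obtain ⟨hA, hB, hC, hD, hE⟩ := hl'
  have hj1 : 1 ≤ j - 1 := by omega
  have hjj : j - 1 + 1 = j := by omega
  set l : ℕ → ℕ := fun k => if k = j then i else l' k with hl
  have hlj : l j = i := by simp [hl]
  have hlk : ∀ k, k ≤ j - 1 → l k = l' k := by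
    intro k hk; simp only [hl]; rw [if_neg (by omega)]
  have hljm : l (j-1) = r := by rw [hlk _ le_rfl, hC]
  refine ⟨l, ⟨?_, ?_, hlj, ?_, ?_⟩, hljm, ?_⟩
  · intro k hk1 hk2
    rcases eq_or_lt_of_le hk2 with h | h
    · rw [h, hlj]; exact ⟨hi1, hin⟩
    · rw [hlk k (by omega)]; exact hA k hk1 (by omega)
  · intro k hk1 hk2
    rcases eq_or_lt_of_le (Nat.succ_le_of_lt hk2) with h | h
    · have hk : k = j - 1 := by omega
      rw [hk, hljm]
      have : l (j-1+1) = i := by rw [hjj, hlj]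
      rw [this]; exact hri
    · rw [hlk k (by omega), hlk (k+1) (by omega)]
      exact hB k hk1 (by omega)
  · intro k hk1 hk2
    rcases eq_or_lt_of_le (Nat.succ_le_of_lt hk2) with h | h
    · have hk : k = j - 1 := by omega
      subst hk
      rw [hljm]
      have : l (j-1+1) = i := by rw [hjj, hlj]
      rw [this]
      exact ⟨hgap1, hgap2⟩
    · rw [hlk k (by omega), hlk (k+1) (by omega)]
      exact hD k hk1 (by omega)
  · intro k hk1 hk2
    rcases eq_or_lt_of_le hk2 with h | h
    · rw [h, hlj]; exact hδ
    · rw [hlk k (by omega)]; exact hE k hk1 (by omega)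
  · have hsplit : gammaDist s p j l
        = gammaDist s p (j-1) l + |s (l j) - p j| := by
      unfold gammaDist
      rw [← hjj, Finset.sum_Icc_succ_top (by omega : 1 ≤ j - 1 + 1)]
      simp
    have heq : gammaDist s p (j-1) l = gammaDist s p (j-1) l' := by
      unfold gammaDist
      refine Finset.sum_congr rfl fun k hk => ?_
      rw [hlk k (Finset.mem_Icc.mp hk).2]
    rw [hsplit, heq, hd, hlj]
    exact hM
end
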